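/- Fix d > 0, λ > 0, δ > 0 and u ∈ ℝ. Define the Berhu penalty P(β) = 2λ·(|β|·1{|β| < δ} + ((β² + δ²)/(2δ))·1{|β| ≥ δ}). Then the function h(β) = dβ² − 2uβ + P(β) attains its global minimum over β ∈ ℝ at β* given by: β* = sign(u)·(|u| − λ)₊/d when |u| < λ + dδ, and β* = uδ/(λ + dδ) when |u| ≥ λ + dδ. -/

import Mathlib

/-!
The objective `h β = d β² - 2 u β + P β` is a quadratic plus the convex Berhu penalty, so it
suffices that `g = 2 (u - d β*)` is a subgradient of `P` at `β*`: then `h β - h β* ≥ d (β - β*)²`.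
When `|u| ≥ λ + d δ`, `β*` lies in the parabolic region `|β*| ≥ δ` and `g = 2 λ β* / δ` is the
slope of the tangent there. Otherwise `β*` is the soft-thresholded value, inside `|β*| < δ`, and
`g / 2` is the soft-thresholding residual: of size at most `λ`, it is a subgradient of
`2 λ |·| ≤ P`, which agrees with `P` at `β*`.
-/

noncomputable section

def berhu (lam δ β : ℝ) : ℝ :=
  2 * lam * (if |β| < δ then |β| else (β ^ 2 + δ ^ 2) / (2 * δ))

def softThreshold (lam u : ℝ) : ℝ :=
  Real.sign u * max (|u| - lam) 0

end

section Berhu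

variable {lam δ : ℝ}

theorem berhu_of_abs_lt {β : ℝ} (h : |β| < δ) : berhu lam δ β = 2 * lam * |β| := by
  rw [berhu, if_pos h]

theorem berhu_of_le_abs {β : ℝ} (h : δ ≤ |β|) :
    berhu lam δ β = lam * (β ^ 2 + δ ^ 2) / δ := by
  rw [berhu, if_neg h.not_gt]
  by_cases hδ : δ = 0
  · simp [hδ]
  · field_simp

theorem two_mul_abs_le_berhu (hlam : 0 ≤ lam) (hδ : 0 < δ) (β : ℝ) :
    2 * lam * |β| ≤ berhu lam δ β := by
  rcases lt_or_ge |β| δ with h | h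
  · rw [berhu_of_abs_lt h]
  · rw [berhu_of_le_abs h, le_div_iff₀ hδ]
    nlinarith [sq_nonneg (|β| - δ), sq_abs β]

/-- On `|b| ≥ δ` the penalty is the parabola `λ (β² + δ²) / δ`, whose tangent at `b` stays below
`2 λ |β|` on `|β| < δ`, since there the gap is at least `λ (|b| - δ)² / δ`. -/
theorem berhu_add_tangent_le (hlam : 0 ≤ lam) (hδ : 0 < δ) {b : ℝ} (hb : δ ≤ |b|) (β : ℝ) :
    berhu lam δ b + 2 * lam * b / δ * (β - b) ≤ berhu lam δ β := by
  rw [berhu_of_le_abs hb]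
  rcases lt_or_ge |β| δ with h | h
  · rw [berhu_of_abs_lt h]
    have hbβ : b * β ≤ |b| * |β| := (le_abs_self _).trans (abs_mul b β).le
    have key : 2 * b * β - b ^ 2 + δ ^ 2 ≤ 2 * δ * |β| := by
      nlinarith [sq_abs b, abs_nonneg β, mul_nonneg (sub_nonneg.2 hb) (sub_nonneg.2 h.le)]
    have expand : lam * (b ^ 2 + δ ^ 2) / δ + 2 * lam * b / δ * (β - b)
        = lam * (2 * b * β - b ^ 2 + δ ^ 2) / δ := by
      field_simp
      ring
    rw [expand, div_le_iff₀ hδ]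
    nlinarith
  · rw [berhu_of_le_abs h, ← sub_nonneg]
    have expand : lam * (β ^ 2 + δ ^ 2) / δ - (lam * (b ^ 2 + δ ^ 2) / δ + 2 * lam * b / δ * (β - b))
        = lam * (β - b) ^ 2 / δ := by
      field_simp
      ring
    rw [expand]
    positivity

theorem berhu_add_subgradient_le (hlam : 0 ≤ lam) (hδ : 0 < δ) {b g : ℝ} (hb : |b| < δ)
    (hg : |g| ≤ 2 * lam) (hgb : g * b = 2 * lam * |b|) (β : ℝ) :
    berhu lam δ b + g * (β - b) ≤ berhu lam δ β :=
  calc berhu lam δ b + g * (β - b) = g * β := by rw [berhu_of_abs_lt hb, ← hgb]; ring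
    _ ≤ |g| * |β| := (le_abs_self _).trans (abs_mul g β).le
    _ ≤ 2 * lam * |β| := by gcongr
    _ ≤ berhu lam δ β := two_mul_abs_le_berhu hlam hδ β

end Berhu

section SoftThreshold

variable {lam : ℝ}

theorem abs_softThreshold (hlam : 0 ≤ lam) (u : ℝ) :
    |softThreshold lam u| = max (|u| - lam) 0 := by
  rcases lt_trichotomy u 0 with hu | rfl | hu
  · simp [softThreshold, Real.sign_of_neg hu]
  · simpa [softThreshold] using hlam
  · simp [softThreshold, Real.sign_of_pos hu]

theorem abs_sub_softThreshold_le (hlam : 0 ≤ lam) (u : ℝ) : |u - softThreshold lam u| ≤ lam := by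
  rw [softThreshold]
  rcases lt_trichotomy u 0 with hu | rfl | hu
  · rw [Real.sign_of_neg hu, abs_of_neg hu, abs_le]
    constructor <;> cases max_cases (-u - lam) 0 <;> linarith
  · simpa using hlam
  · rw [Real.sign_of_pos hu, abs_of_pos hu, abs_le]
    constructor <;> cases max_cases (u - lam) 0 <;> linarith

theorem sub_softThreshold_mul_self (u : ℝ) :
    (u - softThreshold lam u) * softThreshold lam u = lam * |softThreshold lam u| := by
  rw [softThreshold]
  rcases lt_trichotomy u 0 with hu | rfl | hu
  · rw [Real.sign_of_neg hu, abs_of_neg hu, neg_one_mul, abs_neg, abs_of_nonneg (le_max_right _ _)]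
    rcases max_cases (-u - lam) 0 with ⟨h, -⟩ | ⟨h, -⟩ <;> rw [h] <;> ring
  · simp
  · rw [Real.sign_of_pos hu, abs_of_pos hu, one_mul, abs_of_nonneg (le_max_right _ _)]
    rcases max_cases (u - lam) 0 with ⟨h, -⟩ | ⟨h, -⟩ <;> rw [h] <;> ring

end SoftThreshold

theorem quadratic_add_le_of_subgradient {P : ℝ → ℝ} {d u b : ℝ} (hd : 0 ≤ d)
    (hsub : ∀ β, P b + 2 * (u - d * b) * (β - b) ≤ P β) (β : ℝ) :
    d * b ^ 2 - 2 * u * b + P b ≤ d * β ^ 2 - 2 * u * β + P β := by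
  nlinarith [hsub β, mul_nonneg hd (sq_nonneg (β - b))]

section Update

variable {d lam δ u : ℝ}

theorem berhu_subgradient_softThreshold (hd : 0 < d) (hlam : 0 ≤ lam) (hδ : 0 < δ)
    (hu : |u| < lam + d * δ) (β : ℝ) :
    let b := softThreshold lam u / d
    berhu lam δ b + 2 * (u - d * b) * (β - b) ≤ berhu lam δ β := by
  intro b
  have hres : 2 * (u - d * b) = 2 * (u - softThreshold lam u) := by
    rw [mul_div_cancel₀ _ hd.ne']
  have hb : |b| = |softThreshold lam u| / d := by rw [abs_div, abs_of_pos hd]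
  rw [hres]
  refine berhu_add_subgradient_le hlam hδ ?_ ?_ ?_ β
  · rw [hb, div_lt_iff₀ hd, abs_softThreshold hlam, max_lt_iff]
    constructor <;> nlinarith
  · rw [abs_mul, abs_two]
    gcongr
    exact abs_sub_softThreshold_le hlam u
  · rw [hb, mul_div_assoc', mul_assoc, sub_softThreshold_mul_self]
    ring

theorem berhu_subgradient_of_add_le_abs (hd : 0 ≤ d) (hlam : 0 < lam) (hδ : 0 < δ)
    (hu : lam + d * δ ≤ |u|) (β : ℝ) :
    let b := u * δ / (lam + d * δ)
    berhu lam δ b + 2 * (u - d * b) * (β - b) ≤ berhu lam δ β := by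
  intro b
  have hc : 0 < lam + d * δ := by positivity
  have hres : 2 * (u - d * b) = 2 * lam * b / δ := by
    simp only [b]
    field_simp
    ring
  have hb : δ ≤ |b| := by
    rw [abs_div, abs_mul, abs_of_pos hδ, abs_of_pos hc, le_div_iff₀ hc]
    nlinarith
  rw [hres]
  exact berhu_add_tangent_le hlam.le hδ hb β

end Update

/-- closed-form Berhu update.
Fix `d > 0`, `λ > 0`, `δ > 0` and `u ∈ ℝ`.  With the Berhu penalty
`P(β) = 2λ·(|β|·1{|β| < δ} + ((β² + δ²)/(2δ))·1{|β| ≥ δ})`, the function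
`h(β) = dβ² − 2uβ + P(β)` attains its global minimum over `β ∈ ℝ` at `β*`
given by the two-branch Berhu update formula. -/
theorem stmt18 (d lam δ u : ℝ) (hd : 0 < d) (hlam : 0 < lam) (hδ : 0 < δ)
    (P : ℝ → ℝ)
    (hP : ∀ β : ℝ, P β =
      2 * lam * (if |β| < δ then |β| else (β ^ 2 + δ ^ 2) / (2 * δ)))
    (βstar : ℝ)
    (hβstar : βstar =
      if |u| < lam + d * δ then Real.sign u * (max (|u| - lam) 0 / d)
      else u * δ / (lam + d * δ)) :
    ∀ β : ℝ, d * βstar ^ 2 - 2 * u * βstar + P βstar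
      ≤ d * β ^ 2 - 2 * u * β + P β := by
  obtain rfl : P = berhu lam δ := funext hP
  refine quadratic_add_le_of_subgradient hd.le fun β => ?_
  split_ifs at hβstar with hu <;> subst hβstar
  · rw [← mul_div_assoc]
    exact berhu_subgradient_softThreshold hd hlam.le hδ hu β
  · exact berhu_subgradient_of_add_le_abs hd.le hlam hδ (not_lt.1 hu) β
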